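/- For real χ > 0 and natural number n with 2χ < n and n - j ≥ 1, the sum ∑_{i=1}^{n-j} i·(χ/n)^i·(1 - χ/n)^{n-i} is at least (χ/n)·(1 - χ/n)^{n-1} and at most (1 - χ/n)^n · χ(n-χ)/(n-2χ)^2. -/

import Mathlib

/-!
Write `p = χ/n` and `q = 1 - χ/n`. The lower bound is the `i = 1` term of a sum of nonnegative
terms. For the upper bound, `i pⁱ q^(n-i) = qⁿ · i rⁱ` with `r = p/q`, which is `< 1` exactly when
`2χ < n`; the finite sum is then dominated by the full series `∑ i rⁱ = r/(1-r)² = pq/(q-p)²`.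
-/

open Finset

section BinomialDrift

variable {p q : ℝ}

lemma single_term_le_sum_Icc_mul_pow_mul_pow (hp : 0 ≤ p) (hq : 0 ≤ q) {m : ℕ} (hm : 1 ≤ m)
    (n : ℕ) :
    p * q ^ (n - 1) ≤ ∑ i ∈ Icc 1 m, (i : ℝ) * p ^ i * q ^ (n - i) := by
  have h := single_le_sum (f := fun i : ℕ => (i : ℝ) * p ^ i * q ^ (n - i))
    (fun i _ => by positivity) (mem_Icc.mpr ⟨le_rfl, hm⟩)
  simpa using h

lemma mul_pow_mul_pow_sub_eq (hq : q ≠ 0) {i n : ℕ} (hi : i ≤ n) :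
    (i : ℝ) * p ^ i * q ^ (n - i) = q ^ n * ((i : ℝ) * (p / q) ^ i) := by
  have hsplit : q ^ n = q ^ i * q ^ (n - i) := by rw [← pow_add, Nat.add_sub_cancel' hi]
  rw [hsplit, div_pow]
  field_simp

lemma sum_coe_mul_pow_le {r : ℝ} (hr₀ : 0 ≤ r) (hr₁ : r < 1) (s : Finset ℕ) :
    ∑ i ∈ s, (i : ℝ) * r ^ i ≤ r / (1 - r) ^ 2 := by
  have hsum := hasSum_coe_mul_geometric_of_norm_lt_one (𝕜 := ℝ)
    (by rwa [Real.norm_of_nonneg hr₀])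
  rw [← hsum.tsum_eq]
  exact hsum.summable.sum_le_tsum _ fun i _ => by positivity

lemma sum_Icc_mul_pow_mul_pow_le (hp : 0 ≤ p) (hpq : p < q) {m n : ℕ} (hm : m ≤ n) :
    ∑ i ∈ Icc 1 m, (i : ℝ) * p ^ i * q ^ (n - i) ≤ q ^ n * (p * q / (q - p) ^ 2) := by
  have hq : 0 < q := hp.trans_lt hpq
  have hratio : p / q / (1 - p / q) ^ 2 = p * q / (q - p) ^ 2 := by
    have : q - p ≠ 0 := (sub_pos.mpr hpq).ne'
    field_simp
  calc ∑ i ∈ Icc 1 m, (i : ℝ) * p ^ i * q ^ (n - i)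
      = q ^ n * ∑ i ∈ Icc 1 m, (i : ℝ) * (p / q) ^ i := by
        rw [mul_sum]
        exact sum_congr rfl fun i hi =>
          mul_pow_mul_pow_sub_eq hq.ne' ((mem_Icc.mp hi).2.trans hm)
    _ ≤ q ^ n * (p * q / (q - p) ^ 2) := by
        rw [← hratio]
        gcongr
        exact sum_coe_mul_pow_le (by positivity) ((div_lt_one hq).mpr hpq) _

end BinomialDrift

theorem ridge_drift_bounds (χ : ℝ) (n j : ℕ) (hχ : 0 < χ)
    (hn : 2 * χ < n) (hj : 1 ≤ n - j) :
    χ / n * (1 - χ / n) ^ (n - 1) ≤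
      ∑ i ∈ Finset.Icc 1 (n - j), (i : ℝ) * (χ / n) ^ i * (1 - χ / n) ^ (n - i) ∧
    ∑ i ∈ Finset.Icc 1 (n - j), (i : ℝ) * (χ / n) ^ i * (1 - χ / n) ^ (n - i) ≤
      (1 - χ / n) ^ n * (χ * ((n : ℝ) - χ) / ((n : ℝ) - 2 * χ) ^ 2) := by
  have hn₀ : (0 : ℝ) < n := by linarith
  have hp : 0 ≤ χ / n := by positivity
  have hpq : χ / n < 1 - χ / n := by
    rw [lt_sub_iff_add_lt, ← two_mul, ← mul_div_assoc, div_lt_one hn₀]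
    exact hn
  have hconst : χ / n * (1 - χ / n) / (1 - χ / n - χ / n) ^ 2
      = χ * ((n : ℝ) - χ) / ((n : ℝ) - 2 * χ) ^ 2 := by
    have : (n : ℝ) - 2 * χ ≠ 0 := by linarith
    field_simp
    ring
  refine ⟨single_term_le_sum_Icc_mul_pow_mul_pow hp (hp.trans hpq.le) hj n, ?_⟩
  rw [← hconst]
  exact sum_Icc_mul_pow_mul_pow_le hp hpq (Nat.sub_le n j)
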